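/- arXiv:1510.09155 — 4 statements merged into one kernel-verified Lean document; each statement's English description precedes it below -/
import Mathlib

section
/- If a finite metric space M admits a fully labeled tree representation, then M satisfies the fourth-point condition: for every three points x, y, z in M there exists a point p* in M with d(x,p*) + d(y,p*) + d(z,p*) = (1/2)(d(x,y) + d(y,z) + d(z,x)). -/
/-- The total weight of a walk in a graph, with respect to an edge-weight
function `w` on pairs of vertices. -/
def SimpleGraph.Walk.weight {V : Type*} {G : SimpleGraph V} (w : V → V → ℝ)
    {u v : V} (p : G.Walk u v) : ℝ :=
  (p.darts.map fun d => w d.toProd.1 d.toProd.2).sum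

/-- The four-point condition for a metric space. -/
def FourPointCond (X : Type*) [MetricSpace X] : Prop :=
  ∀ q r s t : X,
    dist q r + dist s t ≤ max (dist q s + dist r t) (dist r s + dist q t)

/-- The fourth-point condition for a metric space. -/
def FourthPointCond (X : Type*) [MetricSpace X] : Prop :=
  ∀ x y z : X, ∃ p : X,
    dist x p + dist y p + dist z p = (dist x y + dist y z + dist z x) / 2

/-- A finite metric space `X` has a *fully labeled tree representation* if there is a
tree `G` with strictly positive (symmetric) edge weights `w` together with a bijection
`φ` from `X` to the vertices of `G` such that the weighted path distance in `G`
between `φ x` and `φ y` (the weight of the unique path, i.e. of any path) equals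
`dist x y` for all `x y : X`. -/
def HasFullyLabeledTreeRep (X : Type) [MetricSpace X] : Prop :=
  ∃ (V : Type) (G : SimpleGraph V) (w : V → V → ℝ) (φ : X ≃ V),
    G.IsTree ∧ (∀ u v : V, G.Adj u v → 0 < w u v) ∧ (∀ u v : V, w u v = w v u) ∧
    ∀ x y : X, ∀ p : G.Walk (φ x) (φ y), p.IsPath → p.weight w = dist x y

namespace Aux

open SimpleGraph

lemma weight_append {V : Type*} {G : SimpleGraph V} (w : V → V → ℝ) {u v t : V}
    (p : G.Walk u v) (q : G.Walk v t) :
    (p.append q).weight w = p.weight w + q.weight w := by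
  simp [SimpleGraph.Walk.weight, SimpleGraph.Walk.darts_append]

lemma exists_split {V : Type*} {G : SimpleGraph V} {z x : V}
    (S : Set V) [DecidablePred (· ∈ S)] (Q : G.Walk z x) (hx : x ∈ S) :
    ∃ (m : V) (Q1 : G.Walk z m) (Q2 : G.Walk m x),
      Q = Q1.append Q2 ∧ m ∈ S ∧ ∀ v ∈ Q1.support, v ≠ m → v ∉ S := by
  revert hx
  induction Q with
  | nil => exact fun hx => ⟨_, .nil, .nil, rfl, hx, by simp⟩
  | @cons a b c hab q ih =>
    intro hx
    by_cases ha : a ∈ S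
    · refine ⟨a, .nil, .cons hab q, rfl, ha, ?_⟩
      intro v hv hvne
      simp at hv
      exact absurd hv hvne
    · obtain ⟨m, Q1, Q2, heq, hm, hQ1⟩ := ih hx
      refine ⟨m, .cons hab Q1, Q2, by rw [heq]; rfl, hm, ?_⟩
      intro v hv hvne
      rw [SimpleGraph.Walk.support_cons, List.mem_cons] at hv
      rcases hv with rfl | hv
      · exact ha
      · exact hQ1 v hv hvne

end Aux

namespace Aux2
open SimpleGraph

lemma isPath_append {V : Type*} {G : SimpleGraph V} {u v t : V}
    {p : G.Walk u v} {q : G.Walk v t} (hp : p.IsPath) (hq : q.IsPath)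
    (hint : ∀ a ∈ p.support, a ∈ q.support → a = v) : (p.append q).IsPath := by
  rw [SimpleGraph.Walk.isPath_def, SimpleGraph.Walk.support_append]
  apply List.Nodup.append hp.support_nodup
  · exact (SimpleGraph.Walk.isPath_def _ |>.mp hq).tail
  · intro a hap haq
    have hav : a = v := hint a hap (List.mem_of_mem_tail haq)
    subst hav
    have := hq.support_nodup
    rw [SimpleGraph.Walk.support_eq_cons] at this
    exact (List.nodup_cons.mp this).1 haq
end Aux2


open SimpleGraph in
theorem fourth_point_of_fully_labeled_tree_rep
    {X : Type} [MetricSpace X] [Fintype X]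
    (h : HasFullyLabeledTreeRep X) : FourthPointCond X := by
  classical
  obtain ⟨V, G, w, φ, htree, -, -, hrep⟩ := h
  intro x y z
  obtain ⟨W1⟩ := htree.isConnected (φ x) (φ y)
  obtain ⟨W2⟩ := htree.isConnected (φ z) (φ x)
  set P : G.Walk (φ x) (φ y) := W1.toPath.val
  set Q : G.Walk (φ z) (φ x) := W2.toPath.val
  have hP : P.IsPath := W1.toPath.2
  have hQ : Q.IsPath := W2.toPath.2
  obtain ⟨m, Q1, Q2, hQeq, hmP, hQ1out⟩ :=
    Aux.exists_split (S := {v | v ∈ P.support}) Q (P.start_mem_support)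
  obtain ⟨p, rfl⟩ : ∃ p, φ p = m := ⟨φ.symm m, φ.apply_symm_apply m⟩
  have hmP' : φ p ∈ P.support := hmP
  have hQ1p : Q1.IsPath := by
    rw [hQeq] at hQ; exact hQ.of_append_left
  have hQ2p : Q2.IsPath := by
    rw [hQeq] at hQ; exact hQ.of_append_right
  have hP1p : (P.takeUntil (φ p) hmP').IsPath := hP.takeUntil hmP'
  have hP2p : (P.dropUntil (φ p) hmP').IsPath := hP.dropUntil hmP'
  have hR : (Q1.append (P.dropUntil (φ p) hmP')).IsPath := by
    refine Aux2.isPath_append hQ1p hP2p fun a ha haP2 => ?_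
    by_contra hne
    exact hQ1out a ha hne (Walk.support_dropUntil_subset _ _ haP2)
  have e1 : (P.takeUntil (φ p) hmP').weight w + (P.dropUntil (φ p) hmP').weight w
      = dist x y := by
    rw [← Aux.weight_append, Walk.take_spec]; exact hrep x y P hP
  have e2 : (P.takeUntil (φ p) hmP').weight w = dist x p := hrep x p _ hP1p
  have e3 : (P.dropUntil (φ p) hmP').weight w = dist p y := hrep p y _ hP2p
  have e4 : Q1.weight w + Q2.weight w = dist z x := by
    rw [← Aux.weight_append, ← hQeq]; exact hrep z x Q hQ
  have e5 : Q1.weight w = dist z p := hrep z p _ hQ1p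
  have e6 : Q2.weight w = dist p x := hrep p x _ hQ2p
  have e7 : Q1.weight w + (P.dropUntil (φ p) hmP').weight w = dist z y := by
    rw [← Aux.weight_append]; exact hrep z y _ hR
  refine ⟨p, ?_⟩
  linarith [dist_comm y p, dist_comm z p, dist_comm y z, dist_comm p x]
end

section
/- A finite metric space M admits a fully labeled tree representation if and only if M satisfies both the four-point condition (for all q,r,s,t: d(q,r)+d(s,t) ≤ max{d(q,s)+d(r,t), d(r,s)+d(q,t)}) and the fourth-point condition (for all x,y,z there exists p* with d(x,p*)+d(y,p*)+d(z,p*) = (1/2)(d(x,y)+d(y,z)+d(z,x))). -/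
/-!
Transporting along the labeling, a fully labeled tree representation of `X` is the same as a
tree on the points of `X` in which every path is a geodesic. In such a tree an edge `uv` splits
the points into those beyond `u` and those beyond `v`, and the geodesic between points on
different sides runs through the edge. Inducting along a path with this dichotomy gives both the
four-point condition and medians, which are exactly the fourth points.

Conversely, join two points when no third point lies between them. Finiteness makes this graph
connected. The fourth-point condition makes every path of two edges a geodesic, and the four-point
condition propagates this along longer paths. Finally, a cycle through an edge `uv` would give a
geodesic path from `u` to `v` avoiding that edge, whose second vertex lies strictly between `u` and
`v`.
-/

namespace SimpleGraph.Walk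

variable {V : Type*} {G : SimpleGraph V} {u v x : V}

@[simp]
lemma weight_nil (w : V → V → ℝ) : (nil : G.Walk u u).weight w = 0 := rfl

@[simp]
lemma weight_cons (w : V → V → ℝ) (h : G.Adj u v) (p : G.Walk v x) :
    (cons h p).weight w = w u v + p.weight w := by
  simp [weight]

lemma weight_append (w : V → V → ℝ) (p : G.Walk u v) (q : G.Walk v x) :
    (p.append q).weight w = p.weight w + q.weight w := by
  simp [weight, darts_append]

lemma weight_map {W : Type*} {G' : SimpleGraph W} (f : G →g G') (w : W → W → ℝ)
    (p : G.Walk u v) : (p.map f).weight w = p.weight fun a b => w (f a) (f b) := by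
  induction p <;> simp [*]

lemma weight_congr {w w' : V → V → ℝ} (hw : ∀ a b, G.Adj a b → w a b = w' a b)
    (p : G.Walk u v) : p.weight w = p.weight w' := by
  induction p with
  | nil => rfl
  | cons h p ih => simp [hw _ _ h, ih]

end SimpleGraph.Walk

section MetricInterval

variable {X : Type*} [MetricSpace X] {x y z : X}

def metricInterval (x y : X) : Set X := {z | dist x z + dist z y = dist x y}

lemma mem_metricInterval : z ∈ metricInterval x y ↔ dist x z + dist z y = dist x y := Iff.rfl

lemma left_mem_metricInterval (x y : X) : x ∈ metricInterval x y := by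
  simp [mem_metricInterval]

lemma right_mem_metricInterval (x y : X) : y ∈ metricInterval x y := by
  simp [mem_metricInterval]

lemma metricInterval_comm (x y : X) : metricInterval x y = metricInterval y x := by
  ext z
  rw [mem_metricInterval, mem_metricInterval, dist_comm x z, dist_comm z y, dist_comm x y,
    add_comm]

lemma metricInterval_subset (hz : z ∈ metricInterval x y) :
    metricInterval x z ⊆ metricInterval x y := fun a ha => by
  rw [mem_metricInterval] at *
  linarith [dist_triangle a z y, dist_triangle x a y]

lemma eq_of_mem_metricInterval_of_mem_metricInterval (h₁ : x ∈ metricInterval y z)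
    (h₂ : y ∈ metricInterval x z) : x = y := by
  rw [mem_metricInterval] at *
  exact dist_le_zero.1 (by linarith [dist_comm x y])

lemma metricInterval_ssubset (hz : z ∈ metricInterval x y) (hzy : z ≠ y) :
    metricInterval x z ⊂ metricInterval x y := by
  refine (Set.ssubset_iff_of_subset (metricInterval_subset hz)).2
    ⟨y, right_mem_metricInterval x y, fun hy => hzy ?_⟩
  rw [metricInterval_comm] at hz hy
  exact eq_of_mem_metricInterval_of_mem_metricInterval hz hy

lemma fourthPointCond_iff_exists_median : FourthPointCond X ↔
    ∀ x y z : X, ∃ m, m ∈ metricInterval x y ∧ m ∈ metricInterval y z ∧ m ∈ metricInterval z x := by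
  simp only [FourthPointCond, mem_metricInterval]
  refine forall₃_congr fun x y z => exists_congr fun m => ?_
  have := dist_comm m x; have := dist_comm m y; have := dist_comm m z
  constructor
  · intro h
    refine ⟨?_, ?_, ?_⟩ <;>
      linarith [dist_triangle x m y, dist_triangle y m z, dist_triangle z m x]
  · rintro ⟨h₁, h₂, h₃⟩
    linarith

lemma FourPointCond.mem_metricInterval_extend (h4 : FourPointCond X) {a b v v' : X}
    (hvv' : v ≠ v') (hv : v ∈ metricInterval a v') (hv' : v' ∈ metricInterval v b) :
    v ∈ metricInterval a b := by
  rw [mem_metricInterval] at *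
  have hpos := dist_pos.2 hvv'
  rcases le_max_iff.1 (h4 a v' v b) with h | h <;>
    linarith [dist_comm v v', dist_triangle a v b]

end MetricInterval

section GeodesicPaths

open SimpleGraph (Walk)
open SimpleGraph.Walk (weight_cons weight_append)

variable {X : Type*} [MetricSpace X] {G : SimpleGraph X} {x y z : X}

lemma dist_le_walk_weight (p : G.Walk x y) : dist x y ≤ p.weight dist := by
  induction p with
  | nil => simp
  | @cons u v w _ p ih => rw [weight_cons]; linarith [dist_triangle u v w]

lemma mem_metricInterval_of_walk_weight_eq_dist (p : G.Walk x y)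
    (hp : p.weight dist = dist x y) (hz : z ∈ p.support) : z ∈ metricInterval x y := by
  classical
  have hsplit := congrArg (Walk.weight dist) (p.take_spec hz)
  rw [weight_append] at hsplit
  rw [mem_metricInterval]
  linarith [dist_le_walk_weight (p.takeUntil z hz), dist_le_walk_weight (p.dropUntil z hz),
    dist_triangle x z y]

def IsPathGeodesic (G : SimpleGraph X) : Prop :=
  ∀ ⦃x y : X⦄ (p : G.Walk x y), p.IsPath → p.weight dist = dist x y

end GeodesicPaths

section BetweennessGraph

open SimpleGraph (Walk)
open SimpleGraph.Walk (cons weight_cons cons_isPath_iff cons_isCycle_iff)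

variable {X : Type*} [MetricSpace X]

def betweennessGraph (X : Type*) [MetricSpace X] : SimpleGraph X where
  Adj x y := x ≠ y ∧ metricInterval x y ⊆ {x, y}
  symm := ⟨fun _ _ h => ⟨h.1.symm, by rw [metricInterval_comm, Set.pair_comm]; exact h.2⟩⟩
  loopless := ⟨fun _ h => h.1 rfl⟩

lemma betweennessGraph_adj {x y : X} :
    (betweennessGraph X).Adj x y ↔ x ≠ y ∧ metricInterval x y ⊆ {x, y} := Iff.rfl

lemma betweennessGraph_reachable [Finite X] (x y : X) : (betweennessGraph X).Reachable x y := by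
  induction hn : (metricInterval x y).ncard using Nat.strong_induction_on generalizing x y with
  | _ n ih =>
  by_cases hxy : x = y
  · exact hxy ▸ .refl x
  by_cases hadj : (betweennessGraph X).Adj x y
  · exact hadj.reachable
  obtain ⟨z, hz, hzxy⟩ := Set.not_subset.1 fun h => hadj (betweennessGraph_adj.2 ⟨hxy, h⟩)
  simp only [Set.mem_insert_iff, Set.mem_singleton_iff, not_or] at hzxy
  have hxz := Set.ncard_lt_ncard (metricInterval_ssubset hz hzxy.2) (Set.toFinite _)
  have hzy : (metricInterval z y).ncard < (metricInterval x y).ncard := by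
    rw [metricInterval_comm z, metricInterval_comm x] at *
    exact Set.ncard_lt_ncard (metricInterval_ssubset hz hzxy.1) (Set.toFinite _)
  exact (ih _ (hn ▸ hxz) x z rfl).trans (ih _ (hn ▸ hzy) z y rfl)

lemma mem_metricInterval_of_betweennessGraph_adj_of_adj (hm : FourthPointCond X) {x v y : X}
    (hxv : (betweennessGraph X).Adj x v) (hvy : (betweennessGraph X).Adj v y) (hxy : x ≠ y) :
    v ∈ metricInterval x y := by
  obtain ⟨m, hm₁, hm₂, hm₃⟩ := fourthPointCond_iff_exists_median.1 hm x v y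
  rcases (betweennessGraph_adj.1 hxv).2 hm₁ with rfl | rfl
  · rcases (betweennessGraph_adj.1 hvy).2 hm₂ with rfl | rfl
    · exact absurd rfl hxv.ne
    · exact absurd rfl hxy
  · rwa [metricInterval_comm]

lemma betweennessGraph_isPathGeodesic (h4 : FourPointCond X) (hm : FourthPointCond X) :
    IsPathGeodesic (betweennessGraph X) := by
  intro x y p hp
  induction p with
  | nil => simp
  | @cons x v y hxv q ih =>
    rw [cons_isPath_iff] at hp
    rw [weight_cons, ih hp.1]
    cases q with
    | nil => simp
    | @cons _ v' _ hvv' r =>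
      have hxv' : x ≠ v' := fun h => hp.2 (by simp [h])
      exact h4.mem_metricInterval_extend hvv'.ne
        (mem_metricInterval_of_betweennessGraph_adj_of_adj hm hxv hvv' hxv')
        (mem_metricInterval_of_walk_weight_eq_dist _ (ih hp.1) (by simp))

lemma IsPathGeodesic.betweennessGraph_isAcyclic (hG : IsPathGeodesic (betweennessGraph X)) :
    (betweennessGraph X).IsAcyclic := by
  rintro v (_ | ⟨hvu, q⟩) hc
  · exact Walk.not_isCycle_nil hc
  rw [cons_isCycle_iff] at hc
  cases q with
  | nil => exact hvu.ne rfl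
  | @cons u a _ hua r =>
    have ha := mem_metricInterval_of_walk_weight_eq_dist _ (hG _ hc.1)
      (show a ∈ (cons hua r).support by simp)
    rcases (betweennessGraph_adj.1 hvu.symm).2 ha with rfl | rfl
    · exact hua.ne rfl
    · exact hc.2 (by simp [Sym2.eq_swap])

end BetweennessGraph

namespace IsPathGeodesic

open SimpleGraph (Walk)
open SimpleGraph.Walk (weight_cons cons_isPath_iff)

variable {X : Type*} [MetricSpace X] {G : SimpleGraph X} {a b u v : X}

lemma mem_metricInterval_of_mem_support (hG : IsPathGeodesic G) {x y z : X} {p : G.Walk x y} (hp : p.IsPath)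
    (hz : z ∈ p.support) : z ∈ metricInterval x y :=
  mem_metricInterval_of_walk_weight_eq_dist p (hG p hp) hz

lemma mem_metricInterval_or_of_adj (hG : IsPathGeodesic G) (hconn : G.Connected)
    (h : G.Adj u v) (a : X) : u ∈ metricInterval v a ∨ v ∈ metricInterval u a := by
  obtain ⟨P, hP⟩ := hconn.preconnected.exists_isPath v a
  by_cases hu : u ∈ P.support
  · exact .inl (hG.mem_metricInterval_of_mem_support hP hu)
  · have := hG _ (hP.cons hu (h := h))
    rw [weight_cons, hG P hP] at this
    exact .inr this

lemma mem_metricInterval_of_adj (hG : IsPathGeodesic G) (hT : G.IsTree) (h : G.Adj u v)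
    (ha : v ∈ metricInterval u a) (hb : u ∈ metricInterval v b) : u ∈ metricInterval b a := by
  obtain ⟨A, hA⟩ := hT.connected.preconnected.exists_isPath u b
  obtain ⟨P, hP⟩ := hT.connected.preconnected.exists_isPath b a
  obtain ⟨B, hB⟩ := hT.connected.preconnected.exists_isPath a v
  -- The bridge `uv` lies on the walk `u ⟶ b ⟶ a ⟶ v`, but not on the geodesics `u ⟶ b`, `a ⟶ v`.
  have hbridge := SimpleGraph.isBridge_iff_forall_walk_mem_edges.1
    (SimpleGraph.isAcyclic_iff_forall_adj_isBridge.1 hT.isAcyclic h) (A.append (P.append B))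
  simp only [Walk.edges_append, List.mem_append] at hbridge
  rcases hbridge with hA' | hP' | hB'
  · exact absurd (eq_of_mem_metricInterval_of_mem_metricInterval hb
      (hG.mem_metricInterval_of_mem_support hA (A.snd_mem_support_of_mem_edges hA'))) h.ne
  · exact hG.mem_metricInterval_of_mem_support hP (P.fst_mem_support_of_mem_edges hP')
  · have hu := hG.mem_metricInterval_of_mem_support hB (B.fst_mem_support_of_mem_edges hB')
    rw [metricInterval_comm] at hu
    exact absurd (eq_of_mem_metricInterval_of_mem_metricInterval hu ha) h.ne

lemma dist_add_dist_le_max_of_isPath (hG : IsPathGeodesic G) (hT : G.IsTree) {q r : X} (p : G.Walk q r)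
    (hp : p.IsPath) (s t : X) :
    dist q r + dist s t ≤ max (dist q s + dist r t) (dist r s + dist q t) := by
  induction p with
  | nil => simpa using dist_triangle_left s t _
  | @cons q u r e p ih =>
    have hu : u ∈ metricInterval q r := hG.mem_metricInterval_of_mem_support hp (by simp)
    rw [cons_isPath_iff] at hp
    rcases hG.mem_metricInterval_or_of_adj hT.connected e s with hs | hs
    · have hq := hG.mem_metricInterval_of_adj hT e hu hs
      rw [mem_metricInterval] at hq
      have := dist_triangle s q t
      exact le_max_of_le_right (by linarith [dist_comm r s, dist_comm s q])
    rcases hG.mem_metricInterval_or_of_adj hT.connected e t with ht | ht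
    · have hq := hG.mem_metricInterval_of_adj hT e hu ht
      rw [mem_metricInterval] at hq
      have := dist_triangle s q t
      exact le_max_of_le_left (by linarith [dist_comm r t, dist_comm t q, dist_comm s q])
    rw [mem_metricInterval] at hu hs ht
    rcases le_max_iff.1 (ih hp.1) with h | h
    · exact le_max_of_le_left (by linarith)
    · exact le_max_of_le_right (by linarith)

lemma exists_median_of_isPath (hG : IsPathGeodesic G) (hT : G.IsTree) {y z : X}
    (p : G.Walk y z) (hp : p.IsPath) (x : X) :
    ∃ m, m ∈ metricInterval x y ∧ m ∈ metricInterval y z ∧ m ∈ metricInterval z x := by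
  induction p with
  | @nil y =>
    exact ⟨y, right_mem_metricInterval x y, left_mem_metricInterval y y,
      left_mem_metricInterval y x⟩
  | @cons y u z e p ih =>
    have hu : u ∈ metricInterval y z := hG.mem_metricInterval_of_mem_support hp (by simp)
    rw [cons_isPath_iff] at hp
    rcases hG.mem_metricInterval_or_of_adj hT.connected e x with hx | hx
    · refine ⟨y, right_mem_metricInterval x y, left_mem_metricInterval y z, ?_⟩
      rw [metricInterval_comm]
      exact hG.mem_metricInterval_of_adj hT e hu hx
    · obtain ⟨m, hxu, huz, hzx⟩ := ih hp.1
      rw [metricInterval_comm] at hx hu huz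
      refine ⟨m, metricInterval_subset hx hxu, ?_, hzx⟩
      rw [metricInterval_comm]
      exact metricInterval_subset hu huz

theorem fourPointCond (hG : IsPathGeodesic G) (hT : G.IsTree) : FourPointCond X := by
  intro q r s t
  obtain ⟨p, hp⟩ := hT.connected.preconnected.exists_isPath q r
  exact hG.dist_add_dist_le_max_of_isPath hT p hp s t

theorem fourthPointCond (hG : IsPathGeodesic G) (hT : G.IsTree) : FourthPointCond X := by
  refine fourthPointCond_iff_exists_median.2 fun x y z => ?_
  obtain ⟨p, hp⟩ := hT.connected.preconnected.exists_isPath y z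
  exact hG.exists_median_of_isPath hT p hp x

end IsPathGeodesic

theorem hasFullyLabeledTreeRep_iff {X : Type} [MetricSpace X] :
    HasFullyLabeledTreeRep X ↔ ∃ G : SimpleGraph X, G.IsTree ∧ IsPathGeodesic G := by
  constructor
  · rintro ⟨V, G, w, φ, hT, -, -, hφ⟩
    let ψ := SimpleGraph.Iso.comap φ G
    have hw : ∀ a b, (G.comap φ).Adj a b → w (φ a) (φ b) = dist a b := fun a b h => by
      simpa using hφ a b (.cons (show G.Adj (φ a) (φ b) from h) .nil) (by simp [h.ne])
    refine ⟨G.comap φ, ψ.isTree_iff.2 hT, fun x y p hp => ?_⟩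
    calc p.weight dist = p.weight fun a b => w (φ a) (φ b) := (p.weight_congr hw).symm
      _ = (p.map ψ.toHom).weight w := (p.weight_map ψ.toHom w).symm
      _ = dist x y := hφ x y (p.map ψ.toHom) (hp.map ψ.injective)
  · rintro ⟨G, hT, hG⟩
    exact ⟨X, G, dist, Equiv.refl X, hT, fun _ _ h => dist_pos.2 h.ne, dist_comm,
      fun _ _ p hp => hG p hp⟩

theorem fully_labeled_tree_rep_iff_four_point_and_fourth_point
    {X : Type} [MetricSpace X] [Fintype X] [Nonempty X] :
    HasFullyLabeledTreeRep X ↔ FourPointCond X ∧ FourthPointCond X := by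
  rw [hasFullyLabeledTreeRep_iff]
  constructor
  · rintro ⟨G, hT, hG⟩
    exact ⟨hG.fourPointCond hT, hG.fourthPointCond hT⟩
  · rintro ⟨h4, hm⟩
    have hG := betweennessGraph_isPathGeodesic h4 hm
    exact ⟨betweennessGraph X, ⟨⟨betweennessGraph_reachable⟩, hG.betweennessGraph_isAcyclic⟩, hG⟩
end

section
/- Let M = (X, d) be a finite metric space and K_M the complete graph on X with edge weights w(xy) = d(x,y). If T is a fully labeled tree representation of M, then T is a spanning tree of K_M, and T is the unique minimum spanning tree of K_M: every spanning tree T' of K_M with edge set different from that of T has strictly greater total edge weight. -/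
/-- The total length of a graph on the point set of a metric space, where each edge
`xy` is weighted by `dist x y` (the edge weights of the complete graph `K_M`). -/
noncomputable def totalDist {X : Type*} [MetricSpace X] [Fintype X]
    (G : SimpleGraph X) : ℝ :=
  letI := Classical.decEq X
  letI : DecidableRel G.Adj := fun _ _ => Classical.dec _
  ∑ e ∈ G.edgeFinset, Sym2.lift ⟨fun a b => dist a b, fun a b => dist_comm a b⟩ e

/-! The tree path metric makes the length of an edge `xy` of another spanning tree `T'` equal to
the total length of the `T`-path from `x` to `y`. Hence `len T' = ∑_{f ∈ T} c_f d(f)`, where `c_f`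
counts the edges of `T'` whose `T`-path runs through `f`. Every `c_f ≥ 1`: deleting `f` splits `T`
into two components, and `T'` has an edge joining them. Moreover `∑ c_f > |E(T)| = |E(T')|`, because
each `T`-path has at least one edge and the `T`-path of an edge of `T' \ T` has at least two. So
some `c_f ≥ 2`, and `len T' > len T` as all lengths `d(f)` are positive. -/
open Finset

namespace Finset

variable {α β M : Type*} {s : Finset α} {t : Finset β} {F : α → Finset β}

theorem sum_sum_eq_sum_card_nsmul [DecidableEq β] [AddCommMonoid M] (hF : ∀ a ∈ s, F a ⊆ t)
    (g : β → M) :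
    ∑ a ∈ s, ∑ b ∈ F a, g b = ∑ b ∈ t, #{a ∈ s | b ∈ F a} • g b := by
  rw [sum_comm' (t' := t) (s' := fun b => {a ∈ s | b ∈ F a})]
  · simp only [sum_const]
  · intro a b
    simp only [mem_filter]
    exact ⟨fun h => ⟨⟨h.1, h.2⟩, hF a h.1 h.2⟩, fun h => h.1⟩

theorem sum_lt_sum_sum_of_cover [AddCommMonoid M] [PartialOrder M]
    [IsOrderedCancelAddMonoid M] {g : β → M} (hF : ∀ a ∈ s, F a ⊆ t)
    (hcover : ∀ b ∈ t, ∃ a ∈ s, b ∈ F a) (hcount : #t < ∑ a ∈ s, #(F a))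
    (hg : ∀ b ∈ t, 0 < g b) :
    ∑ b ∈ t, g b < ∑ a ∈ s, ∑ b ∈ F a, g b := by
  classical
  have hcovered : ∀ b ∈ t, 0 < #{a ∈ s | b ∈ F a} := fun b hb => by
    obtain ⟨a, ha, hba⟩ := hcover b hb
    exact card_pos.2 ⟨a, mem_filter.2 ⟨ha, hba⟩⟩
  obtain ⟨b₀, hb₀, htwice⟩ : ∃ b ∈ t, 1 < #{a ∈ s | b ∈ F a} := by
    by_contra! h
    have hsum := sum_sum_eq_sum_card_nsmul hF (fun _ => 1)
    simp only [← card_eq_sum_ones, smul_eq_mul, mul_one] at hsum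
    exact hcount.not_ge (hsum ▸ card_eq_sum_ones t ▸ sum_le_sum h)
  rw [sum_sum_eq_sum_card_nsmul hF]
  refine sum_lt_sum (fun b hb => ?_) ⟨b₀, hb₀, ?_⟩
  · simpa using nsmul_le_nsmul_left (hg b hb).le (hcovered b hb)
  · simpa using nsmul_lt_nsmul_left (hg b₀ hb₀) htwice

end Finset

namespace SimpleGraph

variable {V : Type*} {G : SimpleGraph V}

theorem Walk.weight_eq_sum_map_edges {w : V → V → ℝ} {ℓ : Sym2 V → ℝ}
    (hw : ∀ u v, G.Adj u v → w u v = ℓ s(u, v)) {x y : V} (p : G.Walk x y) :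
    p.weight w = (p.edges.map ℓ).sum := by
  rw [Walk.weight, Walk.edges, List.map_map]
  exact congrArg List.sum (List.map_congr_left fun d _ => hw _ _ d.adj)

theorem Walk.IsTrail.weight_eq_sum_edges [DecidableEq V] {w : V → V → ℝ} {ℓ : Sym2 V → ℝ}
    (hw : ∀ u v, G.Adj u v → w u v = ℓ s(u, v)) {x y : V} {p : G.Walk x y} (hp : p.IsTrail) :
    p.weight w = ∑ e ∈ p.edges.toFinset, ℓ e := by
  rw [p.weight_eq_sum_map_edges hw, List.sum_toFinset _ hp.edges_nodup]

namespace IsTree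

variable (hG : G.IsTree)

noncomputable def path (x y : V) : G.Walk x y :=
  (hG.existsUnique_path x y).exists.choose

theorem isPath_path (x y : V) : (hG.path x y).IsPath :=
  (hG.existsUnique_path x y).exists.choose_spec

theorem eq_path {x y : V} {p : G.Walk x y} (hp : p.IsPath) : p = hG.path x y :=
  (hG.existsUnique_path x y).unique hp (hG.isPath_path x y)

theorem reverse_path (x y : V) : (hG.path x y).reverse = hG.path y x :=
  hG.eq_path (hG.isPath_path x y).reverse

noncomputable def pathEdges [DecidableEq V] : Sym2 V → Finset (Sym2 V) :=
  Sym2.lift ⟨fun x y => (hG.path x y).edges.toFinset, fun x y => by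
    dsimp only
    rw [← hG.reverse_path x y, Walk.edges_reverse, List.toFinset_reverse]⟩

variable [DecidableEq V]

@[simp]
theorem pathEdges_mk (x y : V) : hG.pathEdges s(x, y) = (hG.path x y).edges.toFinset := rfl

theorem pathEdges_subset_edgeFinset [Fintype G.edgeSet] (e : Sym2 V) :
    hG.pathEdges e ⊆ G.edgeFinset := by
  induction e using Sym2.ind with
  | _ x y =>
    intro f hf
    exact mem_edgeFinset.2 ((hG.path x y).edges_subset_edgeSet (List.mem_toFinset.1 hf))

theorem card_pathEdges (x y : V) : #(hG.pathEdges s(x, y)) = (hG.path x y).length := by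
  rw [pathEdges_mk, List.toFinset_card_of_nodup (hG.isPath_path x y).isTrail.edges_nodup,
    Walk.length_edges]

theorem pathEdges_nonempty {e : Sym2 V} (he : ¬e.IsDiag) : (hG.pathEdges e).Nonempty := by
  induction e using Sym2.ind with
  | _ x y =>
    rw [← card_pos, card_pathEdges, pos_iff_ne_zero]
    exact fun h => he (Walk.eq_of_length_eq_zero h)

theorem one_lt_card_pathEdges {e : Sym2 V} (he : ¬e.IsDiag) (heG : e ∉ G.edgeSet) :
    1 < #(hG.pathEdges e) := by
  induction e using Sym2.ind with
  | _ x y =>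
    rw [card_pathEdges]
    rcases h : (hG.path x y).length with _ | _ | n
    · exact absurd (Walk.eq_of_length_eq_zero h) he
    · exact absurd (Walk.adj_of_length_eq_one h) heG
    · omega

theorem exists_mem_pathEdges {G' : SimpleGraph V} (hG' : G'.Connected) {f : Sym2 V}
    (hf : f ∈ G.edgeSet) : ∃ e ∈ G'.edgeSet, f ∈ hG.pathEdges e := by
  induction f using Sym2.ind with
  | _ a b =>
    obtain ⟨d, -, hda, hdb⟩ := (hG'.preconnected a b).some.exists_boundary_dart
      {v | (G.deleteEdges {s(a, b)}).Reachable a v} (Reachable.refl a)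
      (isAcyclic_iff_forall_isBridge.1 hG.isAcyclic hf)
    refine ⟨d.edge, d.edge_mem, ?_⟩
    have : ∀ p : G.Walk d.fst d.snd, s(a, b) ∈ p.edges := by
      simpa using reachable_deleteEdges_iff_exists_walk.not.1 fun h => hdb (hda.trans h)
    simpa [Dart.edge] using this (hG.path _ _)

theorem sum_edgeFinset_lt_sum_pathEdges [Fintype V] {M : Type*} [AddCommMonoid M]
    [PartialOrder M] [IsOrderedCancelAddMonoid M] {G' : SimpleGraph V} [Fintype G.edgeSet]
    [Fintype G'.edgeSet] (hG' : G'.IsTree) (hne : G'.edgeSet ≠ G.edgeSet) {ℓ : Sym2 V → M}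
    (hℓ : ∀ f ∈ G.edgeSet, 0 < ℓ f) :
    ∑ f ∈ G.edgeFinset, ℓ f < ∑ e ∈ G'.edgeFinset, ∑ f ∈ hG.pathEdges e, ℓ f := by
  have hcard : #G.edgeFinset = #G'.edgeFinset := by
    have := hG.card_edgeFinset
    have := hG'.card_edgeFinset
    omega
  obtain ⟨e₀, he₀, he₀G⟩ : ∃ e ∈ G'.edgeFinset, e ∉ G.edgeFinset := by
    by_contra! h
    exact hne (edgeSet_inj.2 (edgeFinset_inj.1 (eq_of_subset_of_card_le h hcard.le)))
  refine sum_lt_sum_sum_of_cover (fun e _ => hG.pathEdges_subset_edgeFinset e)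
    (fun f hf => ?_) ?_ (fun f hf => hℓ f (mem_edgeFinset.1 hf))
  · obtain ⟨e, he, hfe⟩ := hG.exists_mem_pathEdges hG'.connected (mem_edgeFinset.1 hf)
    exact ⟨e, mem_edgeFinset.2 he, hfe⟩
  · calc #G.edgeFinset = ∑ e ∈ G'.edgeFinset, 1 := by rw [hcard, card_eq_sum_ones]
      _ < ∑ e ∈ G'.edgeFinset, #(hG.pathEdges e) := by
        refine sum_lt_sum (fun e he => card_pos.2 (hG.pathEdges_nonempty ?_)) ⟨e₀, he₀, ?_⟩
        · exact G'.not_isDiag_of_mem_edgeSet (mem_edgeFinset.1 he)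
        · exact hG.one_lt_card_pathEdges (G'.not_isDiag_of_mem_edgeSet (mem_edgeFinset.1 he₀))
            (mt mem_edgeFinset.2 he₀G)

end IsTree

end SimpleGraph

open SimpleGraph

theorem totalDist_eq_sum {X : Type*} [MetricSpace X] [Fintype X] (G : SimpleGraph X)
    [Fintype G.edgeSet] : totalDist G = ∑ e ∈ G.edgeFinset, Sym2.lift ⟨dist, dist_comm⟩ e := by
  unfold totalDist
  convert rfl

theorem fully_labeled_tree_rep_is_unique_mst_general {X : Type} [MetricSpace X] [Fintype X]
    (G : SimpleGraph X) (hT : G.IsTree) (w : X → X → ℝ)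
    (hmetric : ∀ x y : X, ∀ p : G.Walk x y, p.IsPath → p.weight w = dist x y) :
    G ≤ ⊤ ∧ (∀ u v : X, G.Adj u v → w u v = dist u v) ∧
      ∀ G' : SimpleGraph X, G'.IsTree → G'.edgeSet ≠ G.edgeSet →
        totalDist G < totalDist G' := by
  classical
  set δ : Sym2 X → ℝ := Sym2.lift ⟨dist, dist_comm⟩
  have hw : ∀ u v, G.Adj u v → w u v = dist u v := fun u v huv => by
    simpa [Walk.weight] using hmetric u v _ (Path.singleton huv).isPath
  refine ⟨le_top, hw, fun G' hT' hne => ?_⟩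
  have hδ : ∀ e, δ e = ∑ f ∈ hT.pathEdges e, δ f := by
    refine Sym2.ind fun x y => ?_
    rw [hT.pathEdges_mk, ← (hT.isPath_path x y).isTrail.weight_eq_sum_edges (ℓ := δ) hw,
      hmetric x y _ (hT.isPath_path x y)]
    rfl
  have hδpos : ∀ f ∈ G.edgeSet, 0 < δ f :=
    Sym2.ind fun x y hxy => dist_pos.2 (G.ne_of_adj hxy)
  calc totalDist G = ∑ f ∈ G.edgeFinset, δ f := totalDist_eq_sum G
    _ < ∑ e ∈ G'.edgeFinset, ∑ f ∈ hT.pathEdges e, δ f :=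
      hT.sum_edgeFinset_lt_sum_pathEdges hT' hne hδpos
    _ = totalDist G' := by rw [totalDist_eq_sum, sum_congr rfl fun e _ => (hδ e).symm]

theorem fully_labeled_tree_rep_is_unique_mst {X : Type} [MetricSpace X] [Fintype X]
    (G : SimpleGraph X) (hT : G.IsTree) (w : X → X → ℝ)
    (hpos : ∀ u v : X, G.Adj u v → 0 < w u v) (hsymm : ∀ u v : X, w u v = w v u)
    (hmetric : ∀ x y : X, ∀ p : G.Walk x y, p.IsPath → p.weight w = dist x y) :
    G ≤ ⊤ ∧ (∀ u v : X, G.Adj u v → w u v = dist u v) ∧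
      ∀ G' : SimpleGraph X, G'.IsTree → G'.edgeSet ≠ G.edgeSet →
        totalDist G < totalDist G' :=
  fully_labeled_tree_rep_is_unique_mst_general G hT w hmetric
end

section
/- Let T be a spanning tree of a graph K on vertex set X, and T' another spanning tree of K with a different edge set. Then for every edge pq of T not in T', the unique path in T' from p to q contains an edge rs not in T such that pq lies on the unique path in T from r to s. -/
/-!
Deleting `pq` from the tree `T` disconnects `p` from `q`. The path `P` in `T'` must therefore
leave the component of `p` in `T - pq` along some edge `rs`, whose ends are separated in `T - pq`.
So every walk from `r` to `s` in `T` uses `pq`; in particular `rs` is not an edge of `T`, since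
otherwise `rs = pq` would lie in `T'`.
-/

namespace SimpleGraph.Walk

variable {V : Type*} {G H : SimpleGraph V}

lemma exists_mem_edges_not_reachable {u v : V} (w : H.Walk u v) (huv : ¬ G.Reachable u v) :
    ∃ x y, s(x, y) ∈ w.edges ∧ ¬ G.Reachable x y := by
  obtain ⟨d, hd, hux, hny⟩ := w.exists_boundary_dart {x | G.Reachable u x} (.refl u) huv
  exact ⟨d.fst, d.snd, List.mem_map_of_mem hd, fun hxy => hny (hux.trans hxy)⟩

end SimpleGraph.Walk

theorem spanning_tree_exchange_edge_general {V : Type*} {T T' : SimpleGraph V} (hT : T.IsTree) :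
    ∀ p q : V, T.Adj p q → s(p, q) ∉ T'.edgeSet →
      ∀ P : T'.Walk p q, P.IsPath →
        ∃ r s : V, s(r, s) ∈ P.edges ∧ s(r, s) ∉ T.edgeSet ∧
          ∀ Q : T.Walk r s, Q.IsPath → s(p, q) ∈ Q.edges := by
  intro p q hpq hpq' P _
  have hcut : ¬ (T.deleteEdges {s(p, q)}).Reachable p q :=
    SimpleGraph.isAcyclic_iff_forall_adj_isBridge.mp hT.isAcyclic hpq
  obtain ⟨r, s, hrs, hcut_rs⟩ := P.exists_mem_edges_not_reachable hcut
  have hcross (Q : T.Walk r s) : s(p, q) ∈ Q.edges :=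
    Q.mem_edges_of_not_reachable_deleteEdges hcut_rs
  refine ⟨r, s, hrs, fun hadj => hpq' ?_, fun Q _ => hcross Q⟩
  have hrs_eq : s(r, s) = s(p, q) := (List.mem_singleton.mp (hcross hadj.toWalk)).symm
  exact hrs_eq ▸ P.edges_subset_edgeSet hrs

theorem spanning_tree_exchange_edge {V : Type*} [Fintype V]
    {K T T' : SimpleGraph V} (hTK : T ≤ K) (hT'K : T' ≤ K)
    (hT : T.IsTree) (hT' : T'.IsTree) (hne : T.edgeSet ≠ T'.edgeSet) :
    ∀ p q : V, T.Adj p q → s(p, q) ∉ T'.edgeSet →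
      ∀ P : T'.Walk p q, P.IsPath →
        ∃ r s : V, s(r, s) ∈ P.edges ∧ s(r, s) ∉ T.edgeSet ∧
          ∀ Q : T.Walk r s, Q.IsPath → s(p, q) ∈ Q.edges :=
  spanning_tree_exchange_edge_general hT
end
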